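/- arXiv:2402.01028 — 9 statements merged into one kernel-verified Lean document; each statement's English description precedes it below -/
import Mathlib

section
/- For integers n > c ≥ q ≥ 1, every collection of directed graphs G_1, …, G_c on a common set of n vertices containing no rainbow copy of the out-star S_{0,q} (a star with center of outdegree q, with q edges each from a distinct graph G_i) satisfies ∑_{i=1}^c e(G_i) ≤ (q−1)(n²−n). -/
private lemma sum_inl_getLeft {α β : Type*} (x : α ⊕ β) (h : x.isLeft) :
    Sum.inl (x.getLeft h) = x := by
  cases x with
  | inl a => rfl
  | inr b => simp at h

/-- Key per-vertex lemma: star bound via Hall's theorem with dummy vertices. -/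
private lemma star_bound {V : Type*} [Fintype V] [DecidableEq V] (n c q : ℕ)
    (hnc : n > c) (hcq : c ≥ q) (hq : q ≥ 1) (hV : Fintype.card V = n) (v : V)
    (t : Fin c → Finset V) (hv : ∀ i, v ∉ t i)
    (hno : ¬ ∃ (u : Fin q → V) (ι : Fin q → Fin c),
      Function.Injective u ∧ Function.Injective ι ∧ ∀ j, u j ∈ t (ι j)) :
    ∑ i, (t i).card ≤ (q - 1) * (n - 1) := by
  classical
  by_contra hsum
  push_neg at hsum
  have hn1 : 1 ≤ n := le_trans hq (le_trans hcq hnc.le)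
  have htcard : ∀ i, (t i).card ≤ n - 1 := by
    intro i
    have hsub : t i ⊆ Finset.univ.erase v := fun x hx =>
      Finset.mem_erase.2 ⟨fun h => hv i (h ▸ hx), Finset.mem_univ x⟩
    calc (t i).card ≤ (Finset.univ.erase v).card := Finset.card_le_card hsub
      _ = n - 1 := by
          rw [Finset.card_erase_of_mem (Finset.mem_univ v), Finset.card_univ, hV]
  -- deficiency-type Hall condition
  have claim : ∀ S : Finset (Fin c), S.card ≤ (S.biUnion t).card + (c - q) := by
    intro S
    by_contra hS
    push_neg at hS
    have hsc : S.card ≤ c := by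
      simpa using Finset.card_le_card (Finset.subset_univ S)
    have h1 : ∀ i ∈ S, (t i).card ≤ (S.biUnion t).card := fun i hi =>
      Finset.card_le_card (Finset.subset_biUnion_of_mem t hi)
    have h2 : ∑ i ∈ S, (t i).card ≤ S.card * (S.biUnion t).card := by
      calc ∑ i ∈ S, (t i).card ≤ ∑ _i ∈ S, (S.biUnion t).card := Finset.sum_le_sum h1
        _ = S.card * (S.biUnion t).card := by rw [Finset.sum_const, smul_eq_mul]
    have h3 : ∑ i ∈ Sᶜ, (t i).card ≤ (c - S.card) * (n - 1) := by
      calc ∑ i ∈ Sᶜ, (t i).card ≤ ∑ _i ∈ Sᶜ, (n - 1) :=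
            Finset.sum_le_sum (fun i _ => htcard i)
        _ = Sᶜ.card * (n - 1) := by rw [Finset.sum_const, smul_eq_mul]
        _ = (c - S.card) * (n - 1) := by
            rw [Finset.card_compl, Fintype.card_fin]
    have hsplit : ∑ i, (t i).card = ∑ i ∈ S, (t i).card + ∑ i ∈ Sᶜ, (t i).card :=
      (Finset.sum_add_sum_compl S _).symm
    have hlt : (q - 1) * (n - 1) < S.card * (S.biUnion t).card + (c - S.card) * (n - 1) :=
      lt_of_lt_of_le hsum (hsplit ▸ add_le_add h2 h3)
    set s := S.card with hs
    set N := (S.biUnion t).card with hN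
    zify [hq, hn1, hsc, hcq] at hlt hS
    have hcn : (c : ℤ) ≤ (n : ℤ) - 1 := by omega
    have hsn : (s : ℤ) ≤ (n : ℤ) - 1 := le_trans (by exact_mod_cast hsc) hcn
    have hNle : (N : ℤ) ≤ (s : ℤ) + q - c - 1 := by linarith
    have hN0 : (0 : ℤ) ≤ (N : ℤ) := Int.natCast_nonneg N
    have key : (0 : ℤ) ≤ ((n : ℤ) - 1 - s) * ((s : ℤ) + q - c - 1) :=
      mul_nonneg (by linarith) (by linarith)
    have hmul : (s : ℤ) * N ≤ (s : ℤ) * ((s : ℤ) + q - c - 1) :=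
      mul_le_mul_of_nonneg_left hNle (Int.natCast_nonneg s)
    nlinarith [hlt, hmul, key]
  -- Hall's theorem with dummies
  have hall : ∀ S : Finset (Fin c),
      S.card ≤ (S.biUnion (fun i => (t i).image Sum.inl ∪
        (Finset.univ : Finset (Fin (c - q))).image Sum.inr)).card := by
    intro S
    rcases S.eq_empty_or_nonempty with rfl | ⟨i0, hi0⟩
    · simp
    refine le_trans (claim S) ?_
    have hsub : (S.biUnion t).image Sum.inl ∪
        (Finset.univ : Finset (Fin (c - q))).image Sum.inr ⊆
        S.biUnion (fun i => (t i).image Sum.inl ∪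
          (Finset.univ : Finset (Fin (c - q))).image Sum.inr) := by
      intro x hx
      rcases Finset.mem_union.1 hx with hx | hx
      · obtain ⟨a, ha, rfl⟩ := Finset.mem_image.1 hx
        obtain ⟨i, hiS, hai⟩ := Finset.mem_biUnion.1 ha
        exact Finset.mem_biUnion.2
          ⟨i, hiS, Finset.mem_union_left _ (Finset.mem_image_of_mem _ hai)⟩
      · exact Finset.mem_biUnion.2 ⟨i0, hi0, Finset.mem_union_right _ hx⟩
    have hdisj : Disjoint ((S.biUnion t).image Sum.inl)
        ((Finset.univ : Finset (Fin (c - q))).image Sum.inr) := by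
      simp only [Finset.disjoint_left, Finset.mem_image]
      rintro x ⟨a, _, rfl⟩ ⟨b, _, hb⟩
      exact Sum.inl_ne_inr hb.symm
    calc (S.biUnion t).card + (c - q)
        = ((S.biUnion t).image Sum.inl).card +
          ((Finset.univ : Finset (Fin (c - q))).image Sum.inr).card := by
          rw [Finset.card_image_of_injective _ Sum.inl_injective,
            Finset.card_image_of_injective _ Sum.inr_injective,
            Finset.card_univ, Fintype.card_fin]
      _ = ((S.biUnion t).image Sum.inl ∪
            (Finset.univ : Finset (Fin (c - q))).image Sum.inr).card :=
          (Finset.card_union_of_disjoint hdisj).symm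
      _ ≤ _ := Finset.card_le_card hsub
  obtain ⟨f, hfinj, hf⟩ := (Finset.all_card_le_biUnion_card_iff_exists_injective _).1 hall
  set L : Finset (Fin c) := Finset.univ.filter (fun i => (f i).isLeft) with hL
  have hRcard : Lᶜ.card ≤ c - q := by
    have himg : Lᶜ.image f ⊆ (Finset.univ : Finset (Fin (c - q))).image Sum.inr := by
      intro x hx
      obtain ⟨i, hi, rfl⟩ := Finset.mem_image.1 hx
      have hnotL : ¬ (f i).isLeft := by
        intro hl
        exact (Finset.mem_compl.1 hi) (by rw [hL]; exact Finset.mem_filter.2 ⟨Finset.mem_univ i, hl⟩)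
      rcases Finset.mem_union.1 (hf i) with h | h
      · obtain ⟨a, _, ha⟩ := Finset.mem_image.1 h
        exact absurd (by rw [← ha]; rfl) hnotL
      · exact h
    calc Lᶜ.card = (Lᶜ.image f).card := (Finset.card_image_of_injective _ hfinj).symm
      _ ≤ ((Finset.univ : Finset (Fin (c - q))).image Sum.inr).card :=
          Finset.card_le_card himg
      _ ≤ c - q := by
          refine le_trans Finset.card_image_le ?_
          simp
  have hLq : q ≤ L.card := by
    have h1 : Lᶜ.card = Fintype.card (Fin c) - L.card := Finset.card_compl L
    have h2 : L.card ≤ c := by simpa using Finset.card_le_card (Finset.subset_univ L)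
    rw [Fintype.card_fin] at h1
    omega
  set ι : Fin q → Fin c := fun j => L.orderEmbOfCardLe hLq j with hι
  have hιinj : Function.Injective ι := fun a b hab =>
    (L.orderEmbOfCardLe hLq).injective hab
  have hιL : ∀ j, ι j ∈ L := fun j => Finset.orderEmbOfCardLe_mem L hLq j
  have hleft : ∀ j, (f (ι j)).isLeft := fun j => (Finset.mem_filter.1 (hιL j)).2
  set u : Fin q → V := fun j => (f (ι j)).getLeft (hleft j) with hu
  have hinl : ∀ j, Sum.inl (u j) = f (ι j) := fun j => sum_inl_getLeft _ (hleft j)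
  have huinj : Function.Injective u := by
    intro a b hab
    apply hιinj
    apply hfinj
    rw [← hinl a, ← hinl b, hab]
  have hmem : ∀ j, u j ∈ t (ι j) := by
    intro j
    rcases Finset.mem_union.1 (hf (ι j)) with h | h
    · obtain ⟨a, ha, hax⟩ := Finset.mem_image.1 h
      have : a = u j := Sum.inl_injective (hax.trans (hinl j).symm)
      exact this ▸ ha
    · obtain ⟨b, _, hb⟩ := Finset.mem_image.1 h
      exact absurd ((hinl j).trans hb.symm) (Sum.inl_ne_inr)
  exact hno ⟨u, ι, huinj, hιinj, hmem⟩

/-- No rainbow out-star `S_{0,q}`: no vertex `v` with `q` out-edges to `q` distinct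
vertices, lying in `q` pairwise distinct graphs of the collection. -/
theorem sum_edges_le_of_no_rainbow_out_star
    (n c q : ℕ) (hnc : n > c) (hcq : c ≥ q) (hq : q ≥ 1)
    (V : Type*) [Fintype V] [DecidableEq V] (hV : Fintype.card V = n)
    (G : Fin c → Finset (V × V))
    (hloop : ∀ i v, (v, v) ∉ G i)
    (hrb : ¬ ∃ (v : V) (u : Fin q → V) (ι : Fin q → Fin c),
      Function.Injective u ∧ Function.Injective ι ∧
      ∀ j, u j ≠ v ∧ (v, u j) ∈ G (ι j)) :
    ∑ i, (G i).card ≤ (q - 1) * (n ^ 2 - n) := by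
  classical
  have hn1 : 1 ≤ n := le_trans hq (le_trans hcq hnc.le)
  -- per-vertex bound
  have hvert : ∀ v : V, ∑ i, ((G i).filter (fun e => e.1 = v)).card ≤ (q - 1) * (n - 1) := by
    intro v
    set t : Fin c → Finset V := fun i => ((G i).filter (fun e => e.1 = v)).image Prod.snd
      with ht
    have hinjOn : ∀ i, Set.InjOn Prod.snd (((G i).filter (fun e => e.1 = v) : Finset (V × V)) : Set (V × V)) := by
      intro i e he e' he' hee
      have h1 := (Finset.mem_filter.1 he).2
      have h2 := (Finset.mem_filter.1 he').2
      exact Prod.ext (h1.trans h2.symm) hee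
    have hcard : ∀ i, ((G i).filter (fun e => e.1 = v)).card = (t i).card := by
      intro i
      rw [ht]
      exact (Finset.card_image_of_injOn (hinjOn i)).symm
    have hv : ∀ i, v ∉ t i := by
      intro i hvi
      obtain ⟨e, he, he2⟩ := Finset.mem_image.1 hvi
      have h1 := (Finset.mem_filter.1 he).2
      have : e = (v, v) := Prod.ext h1 he2
      exact hloop i v (this ▸ (Finset.mem_filter.1 he).1)
    have hno : ¬ ∃ (u : Fin q → V) (ι : Fin q → Fin c),
        Function.Injective u ∧ Function.Injective ι ∧ ∀ j, u j ∈ t (ι j) := by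
      rintro ⟨u, ι, huinj, hιinj, hmem⟩
      refine hrb ⟨v, u, ι, huinj, hιinj, fun j => ?_⟩
      obtain ⟨e, he, he2⟩ := Finset.mem_image.1 (hmem j)
      have h1 := (Finset.mem_filter.1 he).2
      have hGe : (v, u j) ∈ G (ι j) := by
        have : e = (v, u j) := Prod.ext h1 he2
        exact this ▸ (Finset.mem_filter.1 he).1
      refine ⟨fun h => hv (ι j) (h ▸ hmem j), hGe⟩
    calc ∑ i, ((G i).filter (fun e => e.1 = v)).card = ∑ i, (t i).card :=
          Finset.sum_congr rfl (fun i _ => hcard i)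
      _ ≤ (q - 1) * (n - 1) := star_bound n c q hnc hcq hq hV v t hv hno
  have hcount : ∀ i : Fin c, (G i).card = ∑ v, ((G i).filter (fun e => e.1 = v)).card :=
    fun i => Finset.card_eq_sum_card_fiberwise (fun x _ => Finset.mem_univ x.1)
  calc ∑ i, (G i).card = ∑ i, ∑ v, ((G i).filter (fun e => e.1 = v)).card :=
        Finset.sum_congr rfl (fun i _ => hcount i)
    _ = ∑ v, ∑ i, ((G i).filter (fun e => e.1 = v)).card := Finset.sum_comm
    _ ≤ ∑ _v : V, (q - 1) * (n - 1) := Finset.sum_le_sum (fun v _ => hvert v)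
    _ = n * ((q - 1) * (n - 1)) := by
        rw [Finset.sum_const, Finset.card_univ, hV, smul_eq_mul]
    _ = (q - 1) * (n ^ 2 - n) := by
        have h : n ^ 2 - n = n * (n - 1) := by rw [Nat.mul_sub_one, pow_two]
        rw [h, ← mul_assoc, Nat.mul_comm n (q - 1), mul_assoc]
end

section
/- For integers n > c ≥ q ≥ 1, the bound (q−1)(n²−n) is attained: there exists a collection of directed graphs G_1, …, G_c on n common vertices with no rainbow S_{0,q} such that ∑_{i=1}^c e(G_i) = (q−1)(n²−n). -/
/-!
Give the first `q - 1` colours the complete digraph and leave the others empty. Every edge of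
this family carries one of only `q - 1` colours, so no `q` edges receive distinct colours, while
the total number of edges is `(q - 1)(n² - n)`.
-/

open Finset

variable (V : Type*) [Fintype V]

def completeDigraphFamily (c k : ℕ) (i : Fin c) : Finset (V × V) :=
  if (i : ℕ) < k then univ.offDiag else ∅

variable {V} {c k : ℕ}

theorem diag_notMem_completeDigraphFamily (i : Fin c) (v : V) :
    (v, v) ∉ completeDigraphFamily V c k i := by
  unfold completeDigraphFamily
  split_ifs <;> simp

theorem lt_of_mem_completeDigraphFamily {i : Fin c} {e : V × V}
    (he : e ∈ completeDigraphFamily V c k i) : (i : ℕ) < k := by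
  by_contra hik
  simp [completeDigraphFamily, hik] at he

theorem le_of_injective_of_forall_val_lt {q : ℕ} {ι : Fin q → Fin c}
    (hι : Function.Injective ι) (hk : ∀ j, (ι j : ℕ) < k) : q ≤ k := by
  simpa using Fintype.card_le_of_injective (fun j => Fin.castLT (ι j) (hk j))
    fun a b hab => hι <| Fin.ext <| by simpa using congrArg Fin.val hab

theorem not_rainbow_completeDigraphFamily {q : ℕ} (hkq : k < q) (v : V) (u : Fin q → V)
    {ι : Fin q → Fin c} (hι : Function.Injective ι) :
    ¬ ∀ j, (v, u j) ∈ completeDigraphFamily V c k (ι j) := fun h =>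
  (le_of_injective_of_forall_val_lt hι fun j => lt_of_mem_completeDigraphFamily (h j)).not_gt hkq

theorem sum_card_completeDigraphFamily (hkc : k ≤ c) :
    ∑ i, (completeDigraphFamily V c k i).card = k * (Fintype.card V ^ 2 - Fintype.card V) := by
  simp only [completeDigraphFamily, apply_ite card, card_empty]
  rw [sum_ite, sum_const_zero, add_zero, sum_const, smul_eq_mul, Fin.card_filter_val_lt,
    min_eq_right hkc, offDiag_card, card_univ, sq]

theorem exists_no_rainbow_out_star_sum_eq_general
    (n c q : ℕ) (hcq : c ≥ q) (hq : q ≥ 1) :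
    ∃ G : Fin c → Finset (Fin n × Fin n),
      (∀ i v, (v, v) ∉ G i) ∧
      (¬ ∃ (v : Fin n) (u : Fin q → Fin n) (ι : Fin q → Fin c),
        Function.Injective u ∧ Function.Injective ι ∧
        ∀ j, u j ≠ v ∧ (v, u j) ∈ G (ι j)) ∧
      ∑ i, (G i).card = (q - 1) * (n ^ 2 - n) := by
  refine ⟨completeDigraphFamily (Fin n) c (q - 1), diag_notMem_completeDigraphFamily, ?_, ?_⟩
  · rintro ⟨v, u, ι, -, hι, h⟩
    exact not_rainbow_completeDigraphFamily (by omega) v u hι fun j => (h j).2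
  · simpa using sum_card_completeDigraphFamily (V := Fin n) (k := q - 1) (by omega)

/-- Sharpness of the bound `(q-1)(n²-n)` for collections with no rainbow `S_{0,q}`. -/
theorem exists_no_rainbow_out_star_sum_eq
    (n c q : ℕ) (hnc : n > c) (hcq : c ≥ q) (hq : q ≥ 1) :
    ∃ G : Fin c → Finset (Fin n × Fin n),
      (∀ i v, (v, v) ∉ G i) ∧
      (¬ ∃ (v : Fin n) (u : Fin q → Fin n) (ι : Fin q → Fin c),
        Function.Injective u ∧ Function.Injective ι ∧
        ∀ j, u j ≠ v ∧ (v, u j) ∈ G (ι j)) ∧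
      ∑ i, (G i).card = (q - 1) * (n ^ 2 - n) :=
  exists_no_rainbow_out_star_sum_eq_general n c q hcq hq
end

section
/- For integers n > c ≥ q ≥ 1, every collection of directed graphs G_1, …, G_c on a common set of n vertices containing no rainbow S_{0,q} satisfies min_{1≤i≤c} e(G_i) ≤ ⌊n(q−1)/c⌋·(n−1) + r, where r is the remainder of n(q−1) upon division by c. -/
/-!
For a vertex `v`, join each colour `i` to the out-neighbours of `v` in `G i`. A rainbow out-star
at `v` is a matching of size `q` in this bipartite graph, so by the deficiency form of Hall's
theorem it is covered by a set `A v` of colours and a set `B v` of vertices with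
`|A v| + |B v| ≤ q - 1`. By averaging, some colour `i` lies in at most `t ≤ ⌊n(q-1)/c⌋` of the
sets `A v`. A vertex `v` with `i ∈ A v` has at most `n - 1` out-neighbours in `G i`, any other
vertex at most `|B v|`, so `e(G i) ≤ (n - 1) t + ∑ |B v| ≤ (n - 1) t + n(q - 1) - c t`, and
`c ≤ n - 1` turns this into `⌊n(q-1)/c⌋ (n - 1) + r`.
-/

open Finset Function

section RainbowMatching

variable {ι α : Type*}

def HasRainbowMatching (N : ι → Finset α) (q : ℕ) : Prop :=
  ∃ (u : Fin q → α) (κ : Fin q → ι), Injective u ∧ Injective κ ∧ ∀ j, u j ∈ N (κ j)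

variable [Fintype ι] [DecidableEq α] {N : ι → Finset α} {q : ℕ}

/-- Padding every `N i` with the same `|ι| - q` new vertices turns the deficiency condition into
Hall's condition. -/
theorem exists_injective_disjSum_of_forall_card_add_le
    (h : ∀ s : Finset ι, #s + q ≤ #(s.biUnion N) + Fintype.card ι) :
    ∃ f : ι → α ⊕ Fin (Fintype.card ι - q),
      Injective f ∧ ∀ i, f i ∈ (N i).disjSum univ := by
  refine (all_card_le_biUnion_card_iff_exists_injective _).1 fun s => ?_
  obtain rfl | ⟨i, hi⟩ := s.eq_empty_or_nonempty
  · simp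
  have hpad : (s.biUnion N).disjSum (univ : Finset (Fin (Fintype.card ι - q))) ⊆
      s.biUnion fun i => (N i).disjSum univ := by
    rintro (a | b) hx
    · obtain ⟨j, hj, ha⟩ := mem_biUnion.1 (inl_mem_disjSum.1 hx)
      exact mem_biUnion.2 ⟨j, hj, inl_mem_disjSum.2 ha⟩
    · exact mem_biUnion.2 ⟨i, hi, inr_mem_disjSum.2 (mem_univ b)⟩
  calc #s ≤ #(s.biUnion N) + (Fintype.card ι - q) := by have := h s; omega
    _ = #((s.biUnion N).disjSum (univ : Finset (Fin (Fintype.card ι - q)))) := by simp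
    _ ≤ _ := card_le_card hpad

theorem hasRainbowMatching_of_forall_card_add_le
    (h : ∀ s : Finset ι, #s + q ≤ #(s.biUnion N) + Fintype.card ι) : HasRainbowMatching N q := by
  classical
  obtain ⟨f, hf, hfN⟩ := exists_injective_disjSum_of_forall_card_add_le h
  set S := univ.filter fun i => (f i).isLeft
  have hSc : #Sᶜ ≤ Fintype.card ι - q := by
    calc #Sᶜ = #(Sᶜ.image f) := (card_image_of_injective _ hf).symm
      _ ≤ #((∅ : Finset α).disjSum (univ : Finset (Fin (Fintype.card ι - q)))) := by
          refine card_le_card fun x hx => ?_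
          obtain ⟨i, hi, rfl⟩ := mem_image.1 hx
          have := hfN i
          cases hfi : f i <;> simp_all [S]
      _ = _ := by simp
  have hS : q ≤ #S := by
    have := card_add_card_compl S
    have : q ≤ Fintype.card ι := by simpa using h ∅
    omega
  let κ : Fin q ↪ ι := (Fin.castLEEmb hS).trans (S.equivFin.symm.toEmbedding.trans (Embedding.subtype _))
  have hκ (j : Fin q) : ∃ a ∈ N (κ j), f (κ j) = .inl a := by
    have hκS : κ j ∈ S := (S.equivFin.symm _).2
    have := hfN (κ j)
    cases hfi : f (κ j) <;> simp_all [S]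
  choose u huN hu using hκ
  exact ⟨u, κ, fun j j' huj => κ.injective (hf (by rw [hu, hu, huj])), κ.injective, huN⟩

theorem exists_cover_of_not_hasRainbowMatching (h : ¬ HasRainbowMatching N q) :
    ∃ (A : Finset ι) (B : Finset α), #A + #B < q ∧ ∀ i ∉ A, N i ⊆ B := by
  classical
  obtain ⟨s, hs⟩ : ∃ s : Finset ι, #(s.biUnion N) + Fintype.card ι < #s + q := by
    by_contra! hall
    exact h (hasRainbowMatching_of_forall_card_add_le hall)
  refine ⟨sᶜ, s.biUnion N, ?_, fun i hi => subset_biUnion_of_mem N (by simpa using hi)⟩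
  have := card_add_card_compl s
  omega

end RainbowMatching

section OutNeighbourhood

variable {V : Type*} [DecidableEq V] {E : Finset (V × V)} {u v : V}

def outNbhd (E : Finset (V × V)) (v : V) : Finset V := (E.filter (·.1 = v)).image Prod.snd

@[simp]
theorem mem_outNbhd : u ∈ outNbhd E v ↔ (v, u) ∈ E := by
  simp [outNbhd]

variable [Fintype V]

theorem card_eq_sum_card_outNbhd (E : Finset (V × V)) : #E = ∑ v, #(outNbhd E v) := by
  rw [card_eq_sum_card_fiberwise (f := Prod.fst) (t := univ) fun _ _ => mem_univ _]
  refine sum_congr rfl fun v _ => (card_image_of_injOn ?_).symm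
  rintro ⟨a, b⟩ hab ⟨a', b'⟩ hab' (rfl : b = b')
  simp_all

theorem card_outNbhd_le (hv : (v, v) ∉ E) : #(outNbhd E v) ≤ Fintype.card V - 1 := by
  calc #(outNbhd E v) ≤ #(univ.erase v) :=
        card_le_card fun u hu => mem_erase.2 ⟨by rintro rfl; exact hv (mem_outNbhd.1 hu), mem_univ u⟩
    _ = Fintype.card V - 1 := by rw [card_erase_of_mem (mem_univ v), card_univ]

theorem card_le_of_outNbhd_subset (hloop : ∀ v, (v, v) ∉ E) (T : Finset V) (B : V → Finset V)
    (hB : ∀ v ∉ T, outNbhd E v ⊆ B v) : #E ≤ (Fintype.card V - 1) * #T + ∑ v, #(B v) := by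
  calc #E = ∑ v, #(outNbhd E v) := card_eq_sum_card_outNbhd E
    _ ≤ ∑ v, ((if v ∈ T then Fintype.card V - 1 else 0) + #(B v)) := by
        gcongr with v
        split_ifs with hv
        · exact (card_outNbhd_le (hloop v)).trans (Nat.le_add_right _ _)
        · exact (card_le_card (hB v hv)).trans_eq (zero_add _).symm
    _ = (Fintype.card V - 1) * #T + ∑ v, #(B v) := by
        rw [sum_add_distrib, sum_ite_mem, univ_inter, sum_const, smul_eq_mul, mul_comm]

end OutNeighbourhood

theorem exists_card_mul_card_filter_mem_le_sum_card {ι V : Type*} [Fintype ι] [Nonempty ι]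
    [DecidableEq ι] [Fintype V] (A : V → Finset ι) :
    ∃ i, Fintype.card ι * #{v | i ∈ A v} ≤ ∑ v, #(A v) := by
  have hdouble : ∑ i, #{v | i ∈ A v} = ∑ v, #(A v) := by
    simpa [bipartiteAbove, bipartiteBelow] using
      (sum_card_bipartiteAbove_eq_sum_card_bipartiteBelow (fun v i => i ∈ A v)
        (s := univ) (t := univ)).symm
  obtain ⟨i, -, hi⟩ := exists_le_of_sum_le (s := univ) univ_nonempty
    (f := fun i => Fintype.card ι * #{v | i ∈ A v}) (g := fun _ => ∑ v, #(A v))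
    (by simp [← mul_sum, hdouble])
  exact ⟨i, hi⟩

theorem mul_add_le_div_mul_add_mod {c m k Q N : ℕ} (hc : 0 < c) (hcm : c ≤ m)
    (h : c * k + Q ≤ N) : m * k + Q ≤ N / c * m + N % c := by
  obtain ⟨e, he⟩ : ∃ e, N / c = k + e :=
    Nat.exists_eq_add_of_le ((Nat.le_div_iff_mul_le hc).2 (by linarith))
  have hN := Nat.div_add_mod N c
  rw [he] at hN ⊢
  have : c * e ≤ m * e := Nat.mul_le_mul_right e hcm
  nlinarith

theorem min_edges_le_of_no_rainbow_out_star_general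
    (n c q : ℕ) (hnc : n > c) (hcq : c ≥ q)
    (V : Type*) [Fintype V] (hV : Fintype.card V = n)
    (G : Fin c → Finset (V × V))
    (hloop : ∀ i v, (v, v) ∉ G i)
    (hrb : ¬ ∃ (v : V) (u : Fin q → V) (ι : Fin q → Fin c),
      Function.Injective u ∧ Function.Injective ι ∧
      ∀ j, u j ≠ v ∧ (v, u j) ∈ G (ι j)) :
    ∃ i : Fin c, (G i).card ≤ (n * (q - 1) / c) * (n - 1) + n * (q - 1) % c := by
  classical
  have hcover (v : V) : ∃ (A : Finset (Fin c)) (B : Finset V),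
      #A + #B < q ∧ ∀ i ∉ A, outNbhd (G i) v ⊆ B := by
    refine exists_cover_of_not_hasRainbowMatching fun ⟨u, κ, hu, hκ, huG⟩ =>
      hrb ⟨v, u, κ, hu, hκ, fun j => ?_⟩
    have hvu := mem_outNbhd.1 (huG j)
    exact ⟨fun h => hloop (κ j) v (h ▸ hvu), hvu⟩
  choose A B hAB hcovered using hcover
  obtain ⟨v⟩ : Nonempty V := Fintype.card_pos_iff.1 (by omega)
  have hc : 0 < c := by have := hAB v; omega
  have : Nonempty (Fin c) := ⟨⟨0, hc⟩⟩
  obtain ⟨i, hi⟩ := exists_card_mul_card_filter_mem_le_sum_card A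
  have htotal : ∑ v, #(A v) + ∑ v, #(B v) ≤ n * (q - 1) := by
    rw [← sum_add_distrib, ← hV, ← smul_eq_mul, ← card_univ]
    exact sum_le_card_nsmul _ _ _ fun v _ => by have := hAB v; omega
  refine ⟨i, (card_le_of_outNbhd_subset (hloop i) {v | i ∈ A v} B
    fun v hv => hcovered v i (by simpa using hv)).trans ?_⟩
  rw [Fintype.card_fin] at hi
  rw [hV]
  exact mul_add_le_div_mul_add_mod hc (by omega) (by omega)

/-- Minimum version: some color class has at most `⌊n(q-1)/c⌋(n-1) + r` edges,
where `r = n(q-1) mod c`. -/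
theorem min_edges_le_of_no_rainbow_out_star
    (n c q : ℕ) (hnc : n > c) (hcq : c ≥ q) (hq : q ≥ 1)
    (V : Type*) [Fintype V] [DecidableEq V] (hV : Fintype.card V = n)
    (G : Fin c → Finset (V × V))
    (hloop : ∀ i v, (v, v) ∉ G i)
    (hrb : ¬ ∃ (v : V) (u : Fin q → V) (ι : Fin q → Fin c),
      Function.Injective u ∧ Function.Injective ι ∧
      ∀ j, u j ≠ v ∧ (v, u j) ∈ G (ι j)) :
    ∃ i : Fin c, (G i).card ≤ (n * (q - 1) / c) * (n - 1) + n * (q - 1) % c :=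
  min_edges_le_of_no_rainbow_out_star_general n c q hnc hcq V hV G hloop hrb
end

section
/- Suppose c ≥ n and n ≥ q ≥ 1. Then there exists a collection of directed graphs G_1,…,G_c on a common set of n vertices containing no rainbow S_{0,q} with ∑_{i=1}^c e(G_i) = (q−1)cn, which exceeds (q−1)(n²−n) when q ≥ 2. -/
/-!
Give every vertex the same `q - 1` out-neighbours (other than itself) in every colour. The
union of the colours then has out-degree `q - 1 < q` everywhere, so no vertex has `q` distinct
out-neighbours at all, let alone a rainbow star; and the total edge count is `c n (q - 1)`,
which beats `(q - 1)(n² - n)` as soon as `c ≥ n`.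
-/

open Finset Function

section OutNeighborGraph

variable {α : Type*} [Fintype α] [DecidableEq α]

def outNeighborGraph (N : α → Finset α) : Finset (α × α) :=
  univ.filter fun p => p.2 ∈ N p.1

@[simp]
theorem mem_outNeighborGraph {N : α → Finset α} {v w : α} :
    (v, w) ∈ outNeighborGraph N ↔ w ∈ N v := by
  simp [outNeighborGraph]

theorem card_outNeighborGraph (N : α → Finset α) :
    (outNeighborGraph N).card = ∑ v, (N v).card := by
  rw [outNeighborGraph, card_filter, Fintype.sum_prod_type]
  simp only [sum_boole, Nat.cast_id, filter_mem_eq_inter, univ_inter]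

theorem card_le_of_injective_of_mem_outNeighborGraph {N : α → Finset α} {v : α} {q : ℕ}
    {u : Fin q → α} (hu : Injective u) (hmem : ∀ j, (v, u j) ∈ outNeighborGraph N) :
    q ≤ (N v).card := by
  simpa using card_le_card_of_injOn (s := univ) u
    (fun j _ => mem_outNeighborGraph.mp (hmem j)) hu.injOn

theorem exists_forall_notMem_and_card_eq {k : ℕ} (hk : k < Fintype.card α) :
    ∃ N : α → Finset α, ∀ v, v ∉ N v ∧ (N v).card = k := by
  have hchoose (v : α) : ∃ s : Finset α, v ∉ s ∧ s.card = k := by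
    obtain ⟨s, hs, hcard⟩ := exists_subset_card_eq (s := univ.erase v) (n := k)
      (by rw [card_erase_of_mem (mem_univ v), card_univ]; omega)
    exact ⟨s, fun hv => by simpa using hs hv, hcard⟩
  choose N hN using hchoose
  exact ⟨N, hN⟩

end OutNeighborGraph

/-- If `c ≥ n ≥ q ≥ 1`, there is a rainbow-`S_{0,q}`-free collection with total
number of edges `(q-1)cn`, exceeding `(q-1)(n²-n)` when `q ≥ 2`. -/
theorem exists_no_rainbow_out_star_large_sum_of_c_ge_n
    (n c q : ℕ) (hcn : c ≥ n) (hnq : n ≥ q) (hq : q ≥ 1) :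
    ∃ G : Fin c → Finset (Fin n × Fin n),
      (∀ i v, (v, v) ∉ G i) ∧
      (¬ ∃ (v : Fin n) (u : Fin q → Fin n) (ι : Fin q → Fin c),
        Function.Injective u ∧ Function.Injective ι ∧
        ∀ j, u j ≠ v ∧ (v, u j) ∈ G (ι j)) ∧
      ∑ i, (G i).card = (q - 1) * c * n ∧
      (2 ≤ q → (q - 1) * (n ^ 2 - n) < (q - 1) * c * n) := by
  obtain ⟨N, hN⟩ := exists_forall_notMem_and_card_eq (α := Fin n) (k := q - 1)
    (by rw [Fintype.card_fin]; omega)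
  refine ⟨fun _ => outNeighborGraph N, fun _ v => by simpa using (hN v).1, ?_, ?_, ?_⟩
  · rintro ⟨v, u, _, hu, _, hstar⟩
    have hq_le := card_le_of_injective_of_mem_outNeighborGraph hu fun j => (hstar j).2
    have hcard := (hN v).2
    omega
  · simp only [card_outNeighborGraph, fun v => (hN v).2, sum_const, card_univ,
      Fintype.card_fin, smul_eq_mul]
    ring
  · intro hq2
    have hn2 : n ^ 2 - n < c * n := by
      have hsq : n ^ 2 ≤ c * n := by rw [sq]; exact Nat.mul_le_mul_right n hcn
      have hn : n ≤ c * n := Nat.le_mul_of_pos_left n (by omega)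
      omega
    simpa [mul_assoc] using Nat.mul_lt_mul_of_pos_left hn2 (by omega : 0 < q - 1)
end

section
/- Let p, q, c be reals with q ≥ p ≥ 1 and c ≥ p+q. If c ≥ p+2q−1+2√(pq), then for all nonnegative reals α, β, γ with α+β+γ = n, the quantity (q−1)α² + (p+q−1)β² + (p−1)γ² + (p+2q−2)αβ + (2p+q−2)βγ + (c+p−1)αγ is at most ((c−p+1)²/(4(c−q+1)) + p−1)·n². -/
/-- Optimization step of Theorem 3, large `c` regime. -/
theorem quadratic_form_bound_large_c
    (p q c n α β γ : ℝ) (hp : 1 ≤ p) (hpq : p ≤ q) (hc : p + q ≤ c)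
    (hc2 : p + 2 * q - 1 + 2 * Real.sqrt (p * q) ≤ c)
    (hα : 0 ≤ α) (hβ : 0 ≤ β) (hγ : 0 ≤ γ) (hsum : α + β + γ = n) :
    (q - 1) * α ^ 2 + (p + q - 1) * β ^ 2 + (p - 1) * γ ^ 2
      + (p + 2 * q - 2) * α * β + (2 * p + q - 2) * β * γ + (c + p - 1) * α * γ
    ≤ ((c - p + 1) ^ 2 / (4 * (c - q + 1)) + p - 1) * n ^ 2 := by
  set r := Real.sqrt (p * q) with hrdef
  have hr0 : 0 ≤ r := Real.sqrt_nonneg _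
  have hr2 : r ^ 2 = p * q := Real.sq_sqrt (by nlinarith)
  have ht : 0 < c - q + 1 := by linarith
  have hA : 0 ≤ (c - p + 1) ^ 2 - 4 * (c - q + 1) * q := by
    nlinarith [mul_nonneg (show (0:ℝ) ≤ c - (p + 2*q - 1) - 2*r by linarith)
      (show (0:ℝ) ≤ c - (p + 2*q - 1) + 2*r by linarith)]
  set A := (c - p + 1) ^ 2 - 4 * (c - q + 1) * q with hAdef
  have key : ((c - p + 1) ^ 2 / (4 * (c - q + 1)) + p - 1) * n ^ 2
      - ((q - 1) * α ^ 2 + (p + q - 1) * β ^ 2 + (p - 1) * γ ^ 2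
        + (p + 2 * q - 2) * α * β + (2 * p + q - 2) * β * γ + (c + p - 1) * α * γ)
      = (((c + p + 1 - 2*q) * α - (c - p + 1) * γ) ^ 2 + A * β ^ 2
        + (2*A + 4*(c - q + 1)*p) * (α * β) + (2*A + 4*(c - q + 1)*q) * (β * γ))
        / (4 * (c - q + 1)) := by
    rw [hAdef, ← hsum]
    field_simp
    ring
  have hnum : 0 ≤ ((c + p + 1 - 2*q) * α - (c - p + 1) * γ) ^ 2 + A * β ^ 2
      + (2*A + 4*(c - q + 1)*p) * (α * β) + (2*A + 4*(c - q + 1)*q) * (β * γ) := by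
    have h1 : 0 ≤ A * β ^ 2 := mul_nonneg hA (sq_nonneg β)
    have h2 : 0 ≤ (2*A + 4*(c - q + 1)*p) * (α * β) := by
      apply mul_nonneg (by nlinarith) (mul_nonneg hα hβ)
    have h3 : 0 ≤ (2*A + 4*(c - q + 1)*q) * (β * γ) := by
      apply mul_nonneg (by nlinarith) (mul_nonneg hβ hγ)
    have h0 := sq_nonneg ((c + p + 1 - 2*q) * α - (c - p + 1) * γ)
    linarith
  have := div_nonneg hnum (by linarith : (0:ℝ) ≤ 4 * (c - q + 1))
  linarith [key]
end

section
/- Let p, q, c be reals with q ≥ p ≥ 1 and p+q ≤ c ≤ p+2q−1+2√(pq). Then for all nonnegative reals α, β, γ with α+β+γ = n, the quantity (q−1)α² + (p+q−1)β² + (p−1)γ² + (p+2q−2)αβ + (2p+q−2)βγ + (c+p−1)αγ is at most (p+q−1)n². -/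
/-- Optimization step of Theorem 3, small `c` regime. -/
theorem quadratic_form_bound_small_c
    (p q c n α β γ : ℝ) (hp : 1 ≤ p) (hpq : p ≤ q) (hc : p + q ≤ c)
    (hc2 : c ≤ p + 2 * q - 1 + 2 * Real.sqrt (p * q))
    (hα : 0 ≤ α) (hβ : 0 ≤ β) (hγ : 0 ≤ γ) (hsum : α + β + γ = n) :
    (q - 1) * α ^ 2 + (p + q - 1) * β ^ 2 + (p - 1) * γ ^ 2
      + (p + 2 * q - 2) * α * β + (2 * p + q - 2) * β * γ + (c + p - 1) * α * γ
    ≤ (p + q - 1) * n ^ 2 := by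
  have hp0 : (0:ℝ) ≤ p := by linarith
  have hq0 : (0:ℝ) ≤ q := by linarith
  have hsp : Real.sqrt p ^ 2 = p := Real.sq_sqrt hp0
  have hsq : Real.sqrt q ^ 2 = q := Real.sq_sqrt hq0
  have hs : Real.sqrt (p * q) = Real.sqrt p * Real.sqrt q := Real.sqrt_mul hp0 q
  rw [hs] at hc2
  subst hsum
  nlinarith [sq_nonneg (Real.sqrt p * α - Real.sqrt q * γ), mul_nonneg hα hβ,
    mul_nonneg hβ hγ, mul_nonneg hα hγ, mul_nonneg (mul_nonneg hα hγ)
    (sub_nonneg.2 hc2), Real.sqrt_nonneg p, Real.sqrt_nonneg q]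
end

section
/- For integers c ≥ 2 and n ≥ 3, every collection of directed graphs G_1, …, G_c on a common set of n vertices containing no rainbow S_{1,1} satisfies ∑_{i=1}^c e(G_i) ≤ n²−n if c ≤ 3, and ∑_{i=1}^c e(G_i) ≤ c⌊n²/4⌋ if c ≥ 4. -/
open Finset


-- arithmetical facts
lemma arith1a (a b n c : ℕ) (ha : 1 ≤ a) (hb : 1 ≤ b) (hab : a + b = n) (hn : 4 ≤ n)
    (hc : c ≤ 3) : a * (c * b) + n ≤ n ^ 2 := by
  zify at *
  nlinarith [sq_nonneg ((a : ℤ) - b),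
    mul_nonneg (sub_nonneg.2 (by linarith : (4 : ℤ) ≤ a + b)) (by linarith : (0 : ℤ) ≤ a + b),
    mul_le_mul_of_nonneg_right hc (by positivity : (0 : ℤ) ≤ a * b)]

lemma arith1b (a b n c : ℕ) (ha : 1 ≤ a) (hb : 1 ≤ b) (hab : a + b = n) (hn : 4 ≤ n)
    (hc : c ≤ 3) : a * (c + b) + n ≤ n ^ 2 := by
  zify at *
  nlinarith [mul_nonneg (by linarith : (0 : ℤ) ≤ (a : ℤ) - 1) (by linarith : (0 : ℤ) ≤ (b : ℤ) - 1),
    sq_nonneg ((a : ℤ) - b), sq_nonneg ((a : ℤ) - 3), sq_nonneg ((b : ℤ) - 1),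
    mul_le_mul_of_nonneg_left hc (by positivity : (0 : ℤ) ≤ (a : ℤ))]

lemma arith2a_even (a b k c : ℕ) (ha : 1 ≤ a) (hb : 1 ≤ b) (hab : a + b = 2 * k)
    (hk : 2 ≤ k) (hc : 4 ≤ c) : a * (c * b) ≤ c * k ^ 2 := by
  zify at *
  nlinarith [sq_nonneg ((a : ℤ) - b),
    mul_le_mul_of_nonneg_left (by nlinarith [sq_nonneg ((a : ℤ) - b)] : (a : ℤ) * b ≤ k ^ 2)
      (by linarith : (0 : ℤ) ≤ c)]

lemma arith2b_even (a b k c : ℕ) (ha : 1 ≤ a) (hb : 1 ≤ b) (hab : a + b = 2 * k)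
    (hk : 2 ≤ k) (hc : 4 ≤ c) : a * (c + b) ≤ c * k ^ 2 := by
  zify at *
  nlinarith [sq_nonneg ((a : ℤ) - k),
    mul_nonneg (by linarith : (0 : ℤ) ≤ 3 * (k : ℤ) - 2) (by linarith : (0 : ℤ) ≤ (k : ℤ) - 2),
    mul_nonneg (by linarith : (0 : ℤ) ≤ (c : ℤ) - 4) (by nlinarith : (0 : ℤ) ≤ (k : ℤ) ^ 2 - a)]

lemma arith2a_odd (a b k c : ℕ) (ha : 1 ≤ a) (hb : 1 ≤ b) (hab : a + b = 2 * k + 1)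
    (hk : 2 ≤ k) (hc : 4 ≤ c) : a * (c * b) ≤ c * (k ^ 2 + k) := by
  zify at *
  have h : ((a : ℤ) - k) * ((a : ℤ) - k - 1) ≥ 0 := by
    rcases le_or_gt (a : ℤ) k with h | h
    · nlinarith
    · nlinarith
  nlinarith [mul_le_mul_of_nonneg_left (by nlinarith : (a : ℤ) * b ≤ k ^ 2 + k)
    (by linarith : (0 : ℤ) ≤ c)]

lemma arith2b_odd (a b k c : ℕ) (ha : 1 ≤ a) (hb : 1 ≤ b) (hab : a + b = 2 * k + 1)
    (hk : 2 ≤ k) (hc : 4 ≤ c) : a * (c + b) ≤ c * (k ^ 2 + k) := by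
  zify at *
  have h : ((a : ℤ) - k) * ((a : ℤ) - k - 1) ≥ 0 := by
    rcases le_or_gt (a : ℤ) k with h | h
    · nlinarith
    · nlinarith
  nlinarith [mul_nonneg (by linarith : (0 : ℤ) ≤ (c : ℤ) - 4)
    (by nlinarith : (0 : ℤ) ≤ (k : ℤ) ^ 2 + k - a)]

lemma halves_div (k : ℕ) : k ^ 2 / 4 + (k + 1) / 2 ≤ (k + 1) ^ 2 / 4 := by
  obtain ⟨j, rfl | rfl⟩ := Nat.even_or_odd' k
  · have e1 : (2 * j) ^ 2 = 4 * j ^ 2 := by ring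
    have e2 : (2 * j + 1) ^ 2 = 4 * (j ^ 2 + j) + 1 := by ring
    rw [e1, e2]
    generalize j ^ 2 = J
    omega
  · have e1 : (2 * j + 1) ^ 2 = 4 * (j ^ 2 + j) + 1 := by ring
    have e2 : (2 * j + 1 + 1) ^ 2 = 4 * (j ^ 2 + 2 * j + 1) := by ring
    rw [e1, e2]
    generalize j ^ 2 = J
    omega

lemma sq_div4_even (k : ℕ) : (2 * k) ^ 2 / 4 = k ^ 2 := by
  have e : (2 * k) ^ 2 = 4 * k ^ 2 := by ring
  rw [e]; omega

lemma sq_div4_odd (k : ℕ) : (2 * k + 1) ^ 2 / 4 = k ^ 2 + k := by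
  have e : (2 * k + 1) ^ 2 = 4 * (k ^ 2 + k) + 1 := by ring
  rw [e]
  generalize k ^ 2 + k = J
  omega

-- base case: the six disjunctions on a 3-element set
lemma base_case {V : Type*} [DecidableEq V] {c : ℕ} {m : V → V → ℕ} (hdiag : ∀ v, m v v = 0)
    (hstar : ∀ u v w, u ≠ v → v ≠ w → u ≠ w → 2 ≤ m u v → m v w = 0 ∧ m w u = 0)
    (hb : ∀ u v, m u v ≤ c)
    (s : Finset V) (h3 : s.card = 3) :
    (c ≤ 3 → (∑ u ∈ s, ∑ v ∈ s, m u v) ≤ 6) ∧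
    (4 ≤ c → (∑ u ∈ s, ∑ v ∈ s, m u v) ≤ 2 * c) := by
  obtain ⟨x, y, z, hxy, hxz, hyz, rfl⟩ := Finset.card_eq_three.mp h3
  have e : ∀ f : V → ℕ, ∑ u ∈ ({x, y, z} : Finset V), f u = f x + f y + f z := by
    intro f
    rw [Finset.sum_insert (by simp [hxy, hxz]), Finset.sum_insert (by simp [hyz]),
      Finset.sum_singleton]
    ring
  rw [e, e, e, e]
  have d1 : m x y ≤ 1 ∨ (m y z = 0 ∧ m z x = 0) := by
    rcases le_or_gt (m x y) 1 with h | h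
    · exact Or.inl h
    · exact Or.inr (hstar x y z hxy hyz hxz h)
  have d2 : m y x ≤ 1 ∨ (m x z = 0 ∧ m z y = 0) := by
    rcases le_or_gt (m y x) 1 with h | h
    · exact Or.inl h
    · exact Or.inr (hstar y x z hxy.symm hxz hyz h)
  have d3 : m x z ≤ 1 ∨ (m z y = 0 ∧ m y x = 0) := by
    rcases le_or_gt (m x z) 1 with h | h
    · exact Or.inl h
    · exact Or.inr (hstar x z y hxz hyz.symm hxy h)
  have d4 : m z x ≤ 1 ∨ (m x y = 0 ∧ m y z = 0) := by
    rcases le_or_gt (m z x) 1 with h | h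
    · exact Or.inl h
    · exact Or.inr (hstar z x y hxz.symm hxy hyz.symm h)
  have d5 : m y z ≤ 1 ∨ (m z x = 0 ∧ m x y = 0) := by
    rcases le_or_gt (m y z) 1 with h | h
    · exact Or.inl h
    · exact Or.inr (hstar y z x hyz hxz.symm hxy.symm h)
  have d6 : m z y ≤ 1 ∨ (m y x = 0 ∧ m x z = 0) := by
    rcases le_or_gt (m z y) 1 with h | h
    · exact Or.inl h
    · exact Or.inr (hstar z y x hyz.symm hxy.symm hxz.symm h)
  have b1 := hb x y; have b2 := hb y x; have b3 := hb x z
  have b4 := hb z x; have b5 := hb y z; have b6 := hb z y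
  have e1 := hdiag x; have e2 := hdiag y; have e3 := hdiag z
  constructor <;> intro hc <;> omega


lemma structure_lemma {V : Type*} [DecidableEq V] {c : ℕ} {m : V → V → ℕ}
    (hdiag : ∀ v, m v v = 0)
    (hstar : ∀ u v w, u ≠ v → v ≠ w → u ≠ w → 2 ≤ m u v → m v w = 0 ∧ m w u = 0)
    (hb : ∀ u v, m u v ≤ c)
    (s : Finset V) (hn : 4 ≤ s.card)
    (hdeg2n : ∀ v ∈ s, 2 * s.card ≤ (∑ y ∈ s, m v y) + (∑ x ∈ s, m x v) + 1)
    (hdeg2c : ∀ v ∈ s, 2 * c + 1 ≤ (∑ y ∈ s, m v y) + (∑ x ∈ s, m x v)) :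
    ∃ a b : ℕ, 1 ≤ a ∧ 1 ≤ b ∧ a + b = s.card ∧
      (∑ u ∈ s, ∑ v ∈ s, m u v) ≤ a * max (c * b) (c + b) := by
  classical
  set A := s.filter (fun u => ∃ w ∈ s, 2 ≤ m u w) with hAdef
  set B := s.filter (fun v => ∃ x ∈ s, 2 ≤ m x v) with hBdef
  have hAs : A ⊆ s := filter_subset _ _
  have hBs : B ⊆ s := filter_subset _ _
  have hne_of_heavy : ∀ {u w : V}, 2 ≤ m u w → u ≠ w := by
    intro u w h he; rw [he, hdiag] at h; omega
  -- no vertex is in both A and B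
  have hnodup : ∀ u, u ∈ A → u ∈ B → False := by
    intro u huA huB
    obtain ⟨hus, w, hws, hmw⟩ := mem_filter.mp huA
    obtain ⟨-, x, hxs, hmx⟩ := mem_filter.mp huB
    have huw : u ≠ w := hne_of_heavy hmw
    have hxu : x ≠ u := hne_of_heavy hmx
    by_cases hwx : w = x
    · subst hwx
      -- 2-cycle heavy: degree of u at most 2c
      have hrow : (∑ y ∈ s, m u y) ≤ c := by
        have : (∑ y ∈ s, m u y) = m u w := by
          apply Finset.sum_eq_single_of_mem w hws
          intro y hy hyw
          by_cases hyu : y = u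
          · rw [hyu]; exact hdiag u
          · exact (hstar w u y huw.symm (Ne.symm hyu) (Ne.symm hyw) hmx).1
        rw [this]; exact hb u w
      have hcol : (∑ y ∈ s, m y u) ≤ c := by
        have : (∑ y ∈ s, m y u) = m w u := by
          apply Finset.sum_eq_single_of_mem w hws
          intro y hy hyw
          by_cases hyu : y = u
          · rw [hyu]; exact hdiag u
          · exact (hstar u w y huw hyw.symm (Ne.symm hyu) hmw).2
        rw [this]; exact hb w u
      have := hdeg2c u hus
      omega
    · have := (hstar u w x huw hwx (Ne.symm hxu) hmw).2
      omega
  have hdisj : Disjoint A B := Finset.disjoint_left.mpr (fun {a} h1 h2 => hnodup a h1 h2)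
  -- A and B cover s
  have hcover : ∀ v ∈ s, v ∈ A ∪ B := by
    intro v hvs
    by_contra hv
    rw [mem_union] at hv
    push_neg at hv
    obtain ⟨hvA, hvB⟩ := hv
    have hA1 : ∀ y ∈ s, m v y ≤ 1 := by
      intro y hy
      by_contra h
      exact hvA (mem_filter.mpr ⟨hvs, y, hy, by omega⟩)
    have hB1 : ∀ y ∈ s, m y v ≤ 1 := by
      intro y hy
      by_contra h
      exact hvB (mem_filter.mpr ⟨hvs, y, hy, by omega⟩)
    have hrow : (∑ y ∈ s, m v y) ≤ s.card - 1 := by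
      rw [← Finset.sum_erase_add s _ hvs, hdiag, add_zero]
      calc (∑ y ∈ s.erase v, m v y) ≤ ∑ y ∈ s.erase v, 1 :=
            Finset.sum_le_sum (fun y hy => hA1 y (mem_of_mem_erase hy))
        _ = s.card - 1 := by rw [Finset.sum_const, smul_eq_mul, mul_one, card_erase_of_mem hvs]
    have hcol : (∑ y ∈ s, m y v) ≤ s.card - 1 := by
      rw [← Finset.sum_erase_add s _ hvs, hdiag, add_zero]
      calc (∑ y ∈ s.erase v, m y v) ≤ ∑ y ∈ s.erase v, 1 :=
            Finset.sum_le_sum (fun y hy => hB1 y (mem_of_mem_erase hy))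
        _ = s.card - 1 := by rw [Finset.sum_const, smul_eq_mul, mul_one, card_erase_of_mem hvs]
    have := hdeg2n v hvs
    omega
  have hunion : A ∪ B = s := by
    apply Finset.Subset.antisymm
    · exact Finset.union_subset hAs hBs
    · intro v hv; exact hcover v hv
  -- nonemptiness
  have hsne : s.Nonempty := Finset.card_pos.mp (by omega)
  obtain ⟨v₀, hv₀⟩ := hsne
  have hABne : A.Nonempty ∧ B.Nonempty := by
    rcases mem_union.mp (hcover v₀ hv₀) with h | h
    · obtain ⟨hvs, w, hws, hmw⟩ := mem_filter.mp h
      exact ⟨⟨v₀, h⟩, ⟨w, mem_filter.mpr ⟨hws, v₀, hvs, hmw⟩⟩⟩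
    · obtain ⟨hvs, x, hxs, hmx⟩ := mem_filter.mp h
      exact ⟨⟨x, mem_filter.mpr ⟨hxs, v₀, hvs, hmx⟩⟩, ⟨v₀, h⟩⟩
  -- sources of a vertex of A lie in B (single witness), in particular:
  have hAA : ∀ u ∈ s, u ∉ B → ∀ y ∈ A, m u y = 0 := by
    intro u hus huB y hyA
    obtain ⟨hys, w, hws, hmw⟩ := mem_filter.mp hyA
    have hwB : w ∈ B := mem_filter.mpr ⟨hws, y, hys, hmw⟩
    by_cases huy : u = y
    · subst huy; exact hdiag u
    · have huw : u ≠ w := fun h => huB (h ▸ hwB)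
      exact (hstar y w u (hne_of_heavy hmw) (fun h => huw h.symm) (Ne.symm huy) hmw).2
  have hcolA : ∀ u ∈ A, (∑ x ∈ s, m x u) ≤ 1 := by
    intro u huA
    obtain ⟨hus, w, hws, hmw⟩ := mem_filter.mp huA
    have hwB : w ∈ B := mem_filter.mpr ⟨hws, u, hus, hmw⟩
    have : (∑ x ∈ s, m x u) = m w u := by
      apply Finset.sum_eq_single_of_mem w hws
      intro y hy hyw
      by_cases hyu : y = u
      · rw [hyu]; exact hdiag u
      · exact (hstar u w y (hne_of_heavy hmw) hyw.symm (Ne.symm hyu) hmw).2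
    rw [this]
    by_contra h
    have : u ∈ B := mem_filter.mpr ⟨hus, w, hws, by omega⟩
    exact hnodup u huA this
  have hrowB : ∀ x ∈ B, ∀ y ∈ B, m x y = 0 := by
    intro x hxB y hyB
    obtain ⟨hxs, u₀, hu₀s, hmu₀⟩ := mem_filter.mp hxB
    have hu₀A : u₀ ∈ A := mem_filter.mpr ⟨hu₀s, x, hxs, hmu₀⟩
    by_cases hxy : x = y
    · subst hxy; exact hdiag x
    · have hu₀y : u₀ ≠ y := fun h => hnodup u₀ hu₀A (h ▸ hyB)
      exact (hstar u₀ x y (hne_of_heavy hmu₀) hxy hu₀y hmu₀).1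
  set b := B.card with hbdef
  have hb1 : 1 ≤ b := Finset.card_pos.mpr hABne.2
  -- per-vertex bound for u ∈ A
  have hper : ∀ u ∈ A, (∑ y ∈ B, m u y) + (∑ x ∈ B, m x u) ≤ max (c * b) (c + b) := by
    intro u huA
    obtain ⟨hus, w, hws, hmw⟩ := mem_filter.mp huA
    have hwB : w ∈ B := mem_filter.mpr ⟨hws, u, hus, hmw⟩
    have hcolB : (∑ x ∈ B, m x u) ≤ 1 :=
      le_trans (Finset.sum_le_sum_of_subset hBs) (hcolA u huA)
    by_cases hz : (∑ x ∈ B, m x u) = 0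
    · have hrow : (∑ y ∈ B, m u y) ≤ c * b := by
        calc (∑ y ∈ B, m u y) ≤ ∑ y ∈ B, c := Finset.sum_le_sum (fun y _ => hb u y)
          _ = c * b := by rw [Finset.sum_const, smul_eq_mul, mul_comm]
      rw [hz, add_zero]
      exact le_trans hrow (le_max_left _ _)
    · -- col = 1; then all out-edges except to w are light
      have hmwu : 1 ≤ m w u := by
        have : (∑ x ∈ B, m x u) = m w u := by
          apply Finset.sum_eq_single_of_mem w hwB
          intro y hy hyw
          by_cases hyu : y = u
          · rw [hyu]; exact hdiag u
          · exact (hstar u w y (hne_of_heavy hmw) hyw.symm (Ne.symm hyu) hmw).2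
        omega
      have hlight : ∀ y ∈ B, y ≠ w → m u y ≤ 1 := by
        intro y hyB hyw
        by_contra h
        have huy : u ≠ y := fun he => hnodup u huA (he ▸ hyB)
        have hyw' : y ≠ w := hyw
        have := (hstar u y w huy hyw' (hne_of_heavy hmw) (by omega)).2
        omega
      have hrow : (∑ y ∈ B, m u y) ≤ c + (b - 1) := by
        rw [← Finset.sum_erase_add B _ hwB]
        have h1 : (∑ y ∈ B.erase w, m u y) ≤ b - 1 := by
          calc (∑ y ∈ B.erase w, m u y) ≤ ∑ y ∈ B.erase w, 1 :=
                Finset.sum_le_sum (fun y hy => hlight y (mem_of_mem_erase hy) (ne_of_mem_erase hy))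
            _ = b - 1 := by rw [Finset.sum_const, smul_eq_mul, mul_one, card_erase_of_mem hwB]
        have h2 : m u w ≤ c := hb u w
        omega
      have : (∑ y ∈ B, m u y) + (∑ x ∈ B, m x u) ≤ c + b := by omega
      exact le_trans this (le_max_right _ _)
  -- total sum
  refine ⟨A.card, b, Finset.card_pos.mpr hABne.1, hb1, ?_, ?_⟩
  · rw [← Finset.card_union_of_disjoint hdisj, hunion]
  · have hsplit : (∑ u ∈ s, ∑ v ∈ s, m u v)
        = (∑ x ∈ A, ∑ y ∈ B, m x y) + (∑ x ∈ B, ∑ y ∈ A, m x y) := by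
      rw [← hunion]
      rw [Finset.sum_union hdisj]
      have e1 : ∀ x ∈ A, (∑ y ∈ A ∪ B, m x y) = ∑ y ∈ B, m x y := by
        intro x hxA
        rw [Finset.sum_union hdisj]
        have : (∑ y ∈ A, m x y) = 0 := by
          apply Finset.sum_eq_zero
          intro y hyA
          exact hAA x (hAs hxA) (fun h => hnodup x hxA h) y hyA
        rw [this, zero_add]
      have e2 : ∀ x ∈ B, (∑ y ∈ A ∪ B, m x y) = ∑ y ∈ A, m x y := by
        intro x hxB
        rw [Finset.sum_union hdisj]
        have : (∑ y ∈ B, m x y) = 0 :=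
          Finset.sum_eq_zero (fun y hyB => hrowB x hxB y hyB)
        rw [this, add_zero]
      rw [Finset.sum_congr rfl e1, Finset.sum_congr rfl e2]
    rw [hsplit, Finset.sum_comm (s := B) (t := A)]
    rw [← Finset.sum_add_distrib]
    calc (∑ u ∈ A, ((∑ y ∈ B, m u y) + (∑ x ∈ B, m x u)))
        ≤ ∑ u ∈ A, max (c * b) (c + b) := Finset.sum_le_sum hper
      _ = A.card * max (c * b) (c + b) := by rw [Finset.sum_const, smul_eq_mul]



lemma erase_split {V : Type*} [DecidableEq V] {m : V → V → ℕ} (s : Finset V) (v : V) (hv : v ∈ s) (hdiag : m v v = 0) :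
    (∑ u ∈ s, ∑ w ∈ s, m u w) = (∑ u ∈ s.erase v, ∑ w ∈ s.erase v, m u w)
      + ((∑ w ∈ s, m v w) + (∑ x ∈ s, m x v)) := by
  have hcol : (∑ x ∈ s, m x v) = ∑ x ∈ s.erase v, m x v := by
    rw [← Finset.sum_erase_add s _ hv, hdiag, add_zero]
  rw [← Finset.sum_erase_add s (fun u => ∑ w ∈ s, m u w) hv]
  have h1 : ∀ u ∈ s.erase v, (∑ w ∈ s, m u w) = (∑ w ∈ s.erase v, m u w) + m u v := by
    intro u _
    rw [Finset.sum_erase_add s _ hv]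
  rw [Finset.sum_congr rfl h1, Finset.sum_add_distrib, hcol]
  ring

lemma lemma1 {V : Type*} [DecidableEq V] {c : ℕ} {m : V → V → ℕ} (hdiag : ∀ v, m v v = 0)
    (hstar : ∀ u v w, u ≠ v → v ≠ w → u ≠ w → 2 ≤ m u v → m v w = 0 ∧ m w u = 0)
    (hb : ∀ u v, m u v ≤ c) (hc : c ≤ 3) :
    ∀ s : Finset V, 3 ≤ s.card → (∑ u ∈ s, ∑ v ∈ s, m u v) + s.card ≤ s.card ^ 2 := by
  intro s
  induction s using Finset.strongInduction with
  | _ s IH =>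
    intro h3
    rcases eq_or_lt_of_le h3 with heq | hlt
    · -- base case |s| = 3
      have hbase := (base_case hdiag hstar hb s heq.symm).1 hc
      rw [← heq]
      omega
    · have h4 : 4 ≤ s.card := hlt
      by_cases hex : ∃ v ∈ s, (∑ y ∈ s, m v y) + (∑ x ∈ s, m x v) ≤ 2 * s.card - 2
      · obtain ⟨v, hv, hdv⟩ := hex
        have hsplit := erase_split s v hv (hdiag v)
        have hcard : (s.erase v).card = s.card - 1 := card_erase_of_mem hv
        have hIH := IH (s.erase v) (Finset.erase_ssubset hv) (by omega)
        set k := (s.erase v).card with hk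
        have hcards : s.card = k + 1 := by omega
        have e : (k + 1) ^ 2 = k ^ 2 + 2 * k + 1 := by ring
        rw [hcards, e]
        have hdv' : (∑ y ∈ s, m v y) + (∑ x ∈ s, m x v) ≤ 2 * k := by omega
        omega
      · push_neg at hex
        have hdeg2n : ∀ v ∈ s, 2 * s.card ≤ (∑ y ∈ s, m v y) + (∑ x ∈ s, m x v) + 1 := by
          intro v hv
          have := hex v hv
          omega
        have hdeg2c : ∀ v ∈ s, 2 * c + 1 ≤ (∑ y ∈ s, m v y) + (∑ x ∈ s, m x v) := by
          intro v hv
          have := hex v hv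
          omega
        obtain ⟨a, b, ha1, hb1, hab, hT⟩ :=
          structure_lemma hdiag hstar hb s h4 hdeg2n hdeg2c
        rcases max_choice (c * b) (c + b) with hmx | hmx <;> rw [hmx] at hT
        · have := arith1a a b s.card c ha1 hb1 hab h4 hc
          omega
        · have := arith1b a b s.card c ha1 hb1 hab h4 hc
          omega

lemma lemma2 {V : Type*} [DecidableEq V] {c : ℕ} {m : V → V → ℕ} (hdiag : ∀ v, m v v = 0)
    (hstar : ∀ u v w, u ≠ v → v ≠ w → u ≠ w → 2 ≤ m u v → m v w = 0 ∧ m w u = 0)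
    (hb : ∀ u v, m u v ≤ c) (hc : 4 ≤ c) :
    ∀ s : Finset V, 3 ≤ s.card → (∑ u ∈ s, ∑ v ∈ s, m u v) ≤ c * (s.card ^ 2 / 4) := by
  intro s
  induction s using Finset.strongInduction with
  | _ s IH =>
    intro h3
    rcases eq_or_lt_of_le h3 with heq | hlt
    · have hbase := (base_case hdiag hstar hb s heq.symm).2 hc
      rw [← heq]
      norm_num
      exact hbase.trans (by omega)
    · have h4 : 4 ≤ s.card := hlt
      by_cases hex : ∃ v ∈ s, (∑ y ∈ s, m v y) + (∑ x ∈ s, m x v) ≤ c * (s.card / 2)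
      · obtain ⟨v, hv, hdv⟩ := hex
        have hsplit := erase_split s v hv (hdiag v)
        have hcard : (s.erase v).card = s.card - 1 := card_erase_of_mem hv
        have hIH := IH (s.erase v) (Finset.erase_ssubset hv) (by omega)
        set k := (s.erase v).card with hk
        have hcards : s.card = k + 1 := by omega
        rw [hcards] at hdv ⊢
        have hdiv := halves_div k
        have step : c * (k ^ 2 / 4) + c * ((k + 1) / 2) ≤ c * ((k + 1) ^ 2 / 4) := by
          rw [← Nat.mul_add]
          exact Nat.mul_le_mul_left c hdiv
        omega
      · push_neg at hex
        have hhalf : 2 * s.card ≤ 4 * (s.card / 2) + 2 := by omega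
        have h4c : 4 * (s.card / 2) ≤ c * (s.card / 2) := Nat.mul_le_mul_right _ hc
        have h2' : 2 ≤ s.card / 2 := by omega
        have hc2 : c * 2 ≤ c * (s.card / 2) := Nat.mul_le_mul_left c h2'
        have hdeg2n : ∀ v ∈ s, 2 * s.card ≤ (∑ y ∈ s, m v y) + (∑ x ∈ s, m x v) + 1 := by
          intro v hv
          have := hex v hv
          omega
        have hdeg2c : ∀ v ∈ s, 2 * c + 1 ≤ (∑ y ∈ s, m v y) + (∑ x ∈ s, m x v) := by
          intro v hv
          have := hex v hv
          omega
        obtain ⟨a, b, ha1, hb1, hab, hT⟩ :=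
          structure_lemma hdiag hstar hb s h4 hdeg2n hdeg2c
        obtain ⟨j, hj | hj⟩ := Nat.even_or_odd' s.card
        · rw [hj, sq_div4_even]
          have hj2 : 2 ≤ j := by omega
          rw [hj] at hab
          rcases max_choice (c * b) (c + b) with hmx | hmx <;> rw [hmx] at hT
          · exact hT.trans (arith2a_even a b j c ha1 hb1 hab hj2 hc)
          · exact hT.trans (arith2b_even a b j c ha1 hb1 hab hj2 hc)
        · rw [hj, sq_div4_odd]
          have hj2 : 2 ≤ j := by omega
          rw [hj] at hab
          rcases max_choice (c * b) (c + b) with hmx | hmx <;> rw [hmx] at hT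
          · exact hT.trans (arith2a_odd a b j c ha1 hb1 hab hj2 hc)
          · exact hT.trans (arith2b_odd a b j c ha1 hb1 hab hj2 hc)

/-- Theorem 5: total edge bound for collections with no rainbow `S_{1,1}`
(directed path of length 2 with edges from two distinct colors). -/
theorem sum_edges_le_of_no_rainbow_path
    (n c : ℕ) (hc : c ≥ 2) (hn : n ≥ 3)
    (V : Type*) [Fintype V] [DecidableEq V] (hV : Fintype.card V = n)
    (G : Fin c → Finset (V × V))
    (hloop : ∀ i v, (v, v) ∉ G i)
    (hrb : ¬ ∃ u v w : V, u ≠ v ∧ v ≠ w ∧ u ≠ w ∧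
      ∃ i j : Fin c, i ≠ j ∧ (u, v) ∈ G i ∧ (v, w) ∈ G j) :
    (c ≤ 3 → ∑ i, (G i).card ≤ n ^ 2 - n) ∧
    (c ≥ 4 → ∑ i, (G i).card ≤ c * (n ^ 2 / 4)) := by
  push_neg at hrb
  set m : V → V → ℕ := fun u v => (Finset.univ.filter (fun i => (u, v) ∈ G i)).card with hm
  have hdiag : ∀ v, m v v = 0 := by
    intro v
    simp only [hm, Finset.card_eq_zero, Finset.filter_eq_empty_iff]
    intro i _
    exact hloop i v
  have hb : ∀ u v, m u v ≤ c := by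
    intro u v
    calc m u v ≤ Finset.univ.card := Finset.card_filter_le _ _
      _ = c := by simp
  have hpos : ∀ u v, 1 ≤ m u v → ∃ i, (u, v) ∈ G i := by
    intro u v h
    obtain ⟨i, hi⟩ := Finset.card_pos.mp h
    exact ⟨i, (Finset.mem_filter.mp hi).2⟩
  have hstar : ∀ u v w, u ≠ v → v ≠ w → u ≠ w → 2 ≤ m u v → m v w = 0 ∧ m w u = 0 := by
    intro u v w huv hvw huw h2
    obtain ⟨i, hi, j, hj, hij⟩ := Finset.one_lt_card.mp h2
    have hiG : (u, v) ∈ G i := (Finset.mem_filter.mp hi).2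
    have hjG : (u, v) ∈ G j := (Finset.mem_filter.mp hj).2
    constructor
    · by_contra h
      obtain ⟨k, hk⟩ := hpos v w (by omega)
      by_cases hik : i = k
      · exact hrb u v w huv hvw huw j k (fun h => hij (hik.trans h.symm)) hjG hk
      · exact hrb u v w huv hvw huw i k hik hiG hk
    · by_contra h
      obtain ⟨k, hk⟩ := hpos w u (by omega)
      by_cases hik : k = i
      · exact hrb w u v huw.symm huv hvw.symm k j (fun h => hij (hik.symm.trans h)) hk hjG
      · exact hrb w u v huw.symm huv hvw.symm k i hik hk hiG
  have hsum : (∑ i, (G i).card) = ∑ u ∈ (Finset.univ : Finset V), ∑ v ∈ Finset.univ, m u v := by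
    have h1 : ∀ i, (G i).card = ∑ u : V, ∑ v : V, if (u, v) ∈ G i then 1 else 0 := by
      intro i
      rw [← Finset.filter_univ_mem (G i), Finset.card_filter]
      rw [← Fintype.sum_prod_type']
      simp
    calc (∑ i, (G i).card) = ∑ i, ∑ u : V, ∑ v : V, if (u, v) ∈ G i then 1 else 0 :=
          Finset.sum_congr rfl (fun i _ => h1 i)
      _ = ∑ u : V, ∑ i, ∑ v : V, (if (u, v) ∈ G i then 1 else 0) := Finset.sum_comm
      _ = ∑ u : V, ∑ v : V, ∑ i, (if (u, v) ∈ G i then 1 else 0) :=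
          Finset.sum_congr rfl (fun u _ => Finset.sum_comm)
      _ = ∑ u ∈ (Finset.univ : Finset V), ∑ v ∈ Finset.univ, m u v :=
          Finset.sum_congr rfl (fun u _ => Finset.sum_congr rfl
            (fun v _ => (Finset.card_filter _ _).symm))
  have hcard : (Finset.univ : Finset V).card = n := by rw [Finset.card_univ, hV]
  constructor
  · intro hc3
    have h := lemma1 hdiag hstar hb hc3 Finset.univ (by omega)
    rw [hcard] at h
    rw [hsum]
    exact Nat.le_sub_of_add_le h
  · intro hc4
    have h := lemma2 hdiag hstar hb hc4 Finset.univ (by omega)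
    rw [hcard] at h
    rw [hsum]
    exact h
end

section
/- For integers c ≥ 4 and n ≥ 3, there exists a collection of directed graphs G_1,…,G_c on a common set of n vertices with no rainbow S_{1,1} such that ∑_{i=1}^c e(G_i) = c⌊n²/4⌋. -/
lemma div_mul_sub_eq (n : ℕ) : n / 2 * (n - n / 2) = n ^ 2 / 4 := by
  rcases Nat.even_or_odd n with ⟨k, hk⟩ | ⟨k, hk⟩
  · subst hk
    have h1 : (k + k) / 2 = k := by omega
    have h2 : (k + k) ^ 2 = 4 * (k * k) := by ring
    rw [h1, h2, Nat.mul_div_cancel_left _ (by norm_num)]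
    have : k + k - k = k := by omega
    rw [this]
  · subst hk
    have h1 : (2 * k + 1) / 2 = k := by omega
    have h2 : (2 * k + 1) ^ 2 = 4 * (k * k + k) + 1 := by ring
    rw [h1, h2, Nat.mul_add_div (by norm_num)]
    have : 2 * k + 1 - k = k + 1 := by omega
    rw [this]
    ring_nf

/-- Sharpness for `c ≥ 4`: a rainbow-`S_{1,1}`-free collection with total number
of edges `c⌊n²/4⌋`. -/
theorem exists_no_rainbow_path_sum_eq
    (n c : ℕ) (hc : c ≥ 4) (hn : n ≥ 3) :
    ∃ G : Fin c → Finset (Fin n × Fin n),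
      (∀ i v, (v, v) ∉ G i) ∧
      (¬ ∃ u v w : Fin n, u ≠ v ∧ v ≠ w ∧ u ≠ w ∧
        ∃ i j : Fin c, i ≠ j ∧ (u, v) ∈ G i ∧ (v, w) ∈ G j) ∧
      ∑ i, (G i).card = c * (n ^ 2 / 4) := by
  refine ⟨fun _ => (Finset.univ.filter (fun v : Fin n => v.val < n / 2)) ×ˢ
      (Finset.univ.filter (fun v : Fin n => n / 2 ≤ v.val)), ?_, ?_, ?_⟩
  · intro i v hv
    simp only [Finset.mem_product, Finset.mem_filter, Finset.mem_univ, true_and] at hv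
    omega
  · rintro ⟨u, v, w, _, _, _, i, j, _, h1, h2⟩
    simp only [Finset.mem_product, Finset.mem_filter, Finset.mem_univ, true_and] at h1 h2
    omega
  · have hA : (Finset.univ.filter (fun v : Fin n => v.val < n / 2)) =
        Finset.Iio (⟨n / 2, by omega⟩ : Fin n) := by
      ext x; simp [Fin.lt_def]
    have hB : (Finset.univ.filter (fun v : Fin n => n / 2 ≤ v.val)) =
        Finset.Ici (⟨n / 2, by omega⟩ : Fin n) := by
      ext x; simp [Fin.le_def]
    rw [Finset.sum_const, Finset.card_univ, Fintype.card_fin, Finset.card_product, hA, hB]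
    simp only [Fin.card_Iio, Fin.card_Ici, smul_eq_mul]
    rw [div_mul_sub_eq]
end

section
/- For any integers c ≥ 2 and n ≥ 4, every collection of directed graphs G_1, …, G_c on a common set of n vertices containing no rainbow S_{1,1} satisfies min_{1≤i≤c} e(G_i) ≤ ⌊n²/4⌋. -/
/-- AM-GM style bound in `ℕ`. -/
lemma mul_four_le_add_sq' (a b : ℕ) : a * b * 4 ≤ (a + b) ^ 2 := by
  nlinarith [two_mul_le_add_sq a b]

/-- Theorem 6: minimum edge bound for collections with no rainbow `S_{1,1}`. -/
theorem min_edges_le_of_no_rainbow_path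
    (n c : ℕ) (hc : c ≥ 2) (hn : n ≥ 4)
    (V : Type*) [Fintype V] [DecidableEq V] (hV : Fintype.card V = n)
    (G : Fin c → Finset (V × V))
    (hloop : ∀ i v, (v, v) ∉ G i)
    (hrb : ¬ ∃ u v w : V, u ≠ v ∧ v ≠ w ∧ u ≠ w ∧
      ∃ i j : Fin c, i ≠ j ∧ (u, v) ∈ G i ∧ (v, w) ∈ G j) :
    ∃ i : Fin c, (G i).card ≤ n ^ 2 / 4 := by
  classical
  by_contra hcon
  push_neg at hcon
  set N := n ^ 2 / 4 with hNdef
  -- the rainbow-free condition as a "forced equality"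
  have rb : ∀ (u v w : V) (i j : Fin c), i ≠ j → (u, v) ∈ G i → (v, w) ∈ G j → u = w := by
    intro u v w i j hij h1 h2
    by_contra huw
    exact hrb ⟨u, v, w, fun h => hloop i v (h ▸ h1), fun h => hloop j v (h ▸ h2),
      huw, i, j, hij, h1, h2⟩
  obtain ⟨i0, i1, hne⟩ : ∃ i j : Fin c, i ≠ j :=
    ⟨⟨0, by omega⟩, ⟨1, by omega⟩, by simp [Fin.ext_iff]⟩
  have hA : N < (G i0).card := hcon i0
  have hB : N < (G i1).card := hcon i1
  set X : Finset V := Finset.univ.filter (fun v => ∃ w, (v, w) ∈ G i0) with hXdef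
  set Y : Finset V := Finset.univ.filter (fun v => ∃ u, (u, v) ∈ G i0) with hYdef
  set P : Finset V :=
    Finset.univ.filter (fun v => ∃ w w', w ≠ w' ∧ (v, w) ∈ G i0 ∧ (v, w') ∈ G i0) with hPdef
  have hmemX : ∀ v : V, v ∈ X ↔ ∃ w, (v, w) ∈ G i0 := by
    intro v; simp [hXdef]
  have hmemY : ∀ v : V, v ∈ Y ↔ ∃ u, (u, v) ∈ G i0 := by
    intro v; simp [hYdef]
  have hmemP : ∀ v : V, v ∈ P ↔ ∃ w w', w ≠ w' ∧ (v, w) ∈ G i0 ∧ (v, w') ∈ G i0 := by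
    intro v; simp [hPdef]
  have hXn : X.card ≤ n := by rw [← hV]; exact X.card_le_univ
  have hYn : Y.card ≤ n := by rw [← hV]; exact Y.card_le_univ
  -- G i0 ⊆ X ×ˢ Y
  have hsub : G i0 ⊆ X ×ˢ Y := by
    intro e he
    rw [Finset.mem_product, hmemX, hmemY]
    exact ⟨⟨e.2, he⟩, ⟨e.1, he⟩⟩
  -- |X| + |Y| ≥ n + 1
  have hxy : n + 1 ≤ X.card + Y.card := by
    by_contra h
    push_neg at h
    have h1 : (G i0).card ≤ X.card * Y.card := by
      calc (G i0).card ≤ (X ×ˢ Y).card := Finset.card_le_card hsub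
        _ = X.card * Y.card := Finset.card_product X Y
    have h2 : X.card * Y.card ≤ N := by
      rw [hNdef, Nat.le_div_iff_mul_le (by norm_num)]
      calc X.card * Y.card * 4 ≤ (X.card + Y.card) ^ 2 := mul_four_le_add_sq' _ _
        _ ≤ n ^ 2 := Nat.pow_le_pow_left (by omega) 2
    omega
  -- P is nonempty
  have hP : P.Nonempty := by
    rw [Finset.nonempty_iff_ne_empty]
    intro hPe
    have hinj : Set.InjOn Prod.fst (G i0 : Set (V × V)) := by
      intro e he e' he' hfst
      by_cases h2 : e.2 = e'.2
      · exact Prod.ext hfst h2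
      · exfalso
        have : e.1 ∈ P := (hmemP e.1).2 ⟨e.2, e'.2, h2, he, hfst ▸ he'⟩
        rw [hPe] at this
        exact Finset.notMem_empty _ this
    have h1 : (G i0).card ≤ n := by
      calc (G i0).card = ((G i0).image Prod.fst).card :=
            (Finset.card_image_of_injOn hinj).symm
        _ ≤ Fintype.card V := Finset.card_le_univ _
        _ = n := hV
    have h2 : n ≤ N := by
      rw [hNdef, Nat.le_div_iff_mul_le (by norm_num)]
      calc n * 4 ≤ n * n := Nat.mul_le_mul_left n hn
        _ = n ^ 2 := (sq n).symm
    omega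
  have hPX : P ⊆ X := by
    intro v hv
    obtain ⟨w, _, _, hw, _⟩ := (hmemP v).1 hv
    exact (hmemX v).2 ⟨w, hw⟩
  have hp1 : 1 ≤ P.card := Finset.card_pos.2 hP
  have hx1 : 1 ≤ X.card := le_trans hp1 (Finset.card_le_card hPX)
  -- split G i1 by whether the head is in X
  set S1 : Finset (V × V) := (G i1).filter (fun e => e.2 ∈ X) with hS1def
  set S2 : Finset (V × V) := (G i1).filter (fun e => e.2 ∉ X) with hS2def
  have hsplit : S1.card + S2.card = (G i1).card :=
    Finset.card_filter_add_card_filter_not (fun e : V × V => e.2 ∈ X)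
  -- S1 bound
  have hS1 : S1.card ≤ X.card - P.card := by
    have hinj : Set.InjOn Prod.snd (S1 : Set (V × V)) := by
      intro e he e' he' hsnd
      rw [Finset.mem_coe, hS1def, Finset.mem_filter] at he he'
      obtain ⟨w, hw⟩ := (hmemX e.2).1 he.2
      have h1 : e.1 = w := rb e.1 e.2 w i1 i0 hne.symm he.1 hw
      have h2 : e'.1 = w := rb e'.1 e'.2 w i1 i0 hne.symm he'.1 (hsnd ▸ hw)
      exact Prod.ext (h1.trans h2.symm) hsnd
    have himg : S1.image Prod.snd ⊆ X \ P := by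
      intro v hv
      obtain ⟨e, he, hev⟩ := Finset.mem_image.1 hv
      simp only [hS1def, Finset.mem_filter] at he
      rw [Finset.mem_sdiff]
      refine ⟨hev ▸ he.2, ?_⟩
      intro hvP
      obtain ⟨w, w', hww, hw, hw'⟩ := (hmemP v).1 hvP
      have h1 : e.1 = w := rb e.1 v w i1 i0 hne.symm (hev ▸ he.1) hw
      have h2 : e.1 = w' := rb e.1 v w' i1 i0 hne.symm (hev ▸ he.1) hw'
      exact hww (h1 ▸ h2)
    calc S1.card = (S1.image Prod.snd).card := (Finset.card_image_of_injOn hinj).symm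
      _ ≤ (X \ P).card := Finset.card_le_card himg
      _ = X.card - P.card := Finset.card_sdiff_of_subset hPX
  -- S2 bound
  have hS2 : S2.card ≤ (n - Y.card) * (n - X.card) := by
    have hsub2 : S2 ⊆ (Finset.univ \ Y) ×ˢ (Finset.univ \ X) := by
      intro e he
      simp only [hS2def, Finset.mem_filter] at he
      rw [Finset.mem_product, Finset.mem_sdiff, Finset.mem_sdiff]
      refine ⟨⟨Finset.mem_univ _, ?_⟩, Finset.mem_univ _, he.2⟩
      intro hY
      obtain ⟨w, hw⟩ := (hmemY e.1).1 hY
      have h1 : w = e.2 := rb w e.1 e.2 i0 i1 hne hw he.1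
      exact he.2 ((hmemX e.2).2 ⟨e.1, h1 ▸ hw⟩)
    calc S2.card ≤ ((Finset.univ \ Y) ×ˢ (Finset.univ \ X)).card :=
          Finset.card_le_card hsub2
      _ = (Finset.univ \ Y).card * (Finset.univ \ X).card := Finset.card_product _ _
      _ = (n - Y.card) * (n - X.card) := by
          rw [Finset.card_sdiff_of_subset (Finset.subset_univ Y),
            Finset.card_sdiff_of_subset (Finset.subset_univ X), Finset.card_univ, hV]
  -- combine
  have htot : (G i1).card ≤ (X.card - P.card) + (n - Y.card) * (n - X.card) := by omega
  have hstep : (n - Y.card) * (n - X.card) ≤ (X.card - 1) * (n - X.card) := by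
    have : n - Y.card ≤ X.card - 1 := by omega
    exact Nat.mul_le_mul_right _ this
  have hfin : (G i1).card ≤ (X.card - 1) * (n - X.card + 1) := by
    have h1 : (G i1).card ≤ (X.card - 1) + (X.card - 1) * (n - X.card) := by omega
    calc (G i1).card ≤ (X.card - 1) + (X.card - 1) * (n - X.card) := h1
      _ = (X.card - 1) * (n - X.card + 1) := by ring
  have habn : (X.card - 1) + (n - X.card + 1) = n := by omega
  have hab : (X.card - 1) * (n - X.card + 1) ≤ N := by
    rw [hNdef, Nat.le_div_iff_mul_le (by norm_num)]
    calc (X.card - 1) * (n - X.card + 1) * 4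
        ≤ ((X.card - 1) + (n - X.card + 1)) ^ 2 := mul_four_le_add_sq' _ _
      _ = n ^ 2 := by rw [habn]
  omega
end
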